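/- Let G = (N, Δ, π) be an infinite bottleneck congestion game and let 𝒜 = ℝ² be totally ordered by the ordinary lexicographical order ≤_lex (i.e., (a₁,a₂) <_lex (b₁,b₂) iff a₁ < b₁, or a₁ = b₁ and a₂ < b₂). Define φ : Δ → 𝒜^m by φ_f(ξ) = (c_f(ℓ_f(ξ)), ℓ_f(ξ)) for all f ∈ F. Then G has the 𝒜-LIP for φ: for every improving move (ξ, (ν_S, ξ_{−S})) of any nonempty coalition S ⊆ N, φ(ν_S, ξ_{−S}) is strictly 𝒜-sorted-lexicographically smaller than φ(ξ). -/

import Mathlib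

/-!
Let `i` be a deviator with the largest old cost `M` and `g` a facility attaining it. A facility
whose load rises gets a new share from some deviator, so its new cost is below `M`; this forces
the load on `g` to change, and makes every entry `φ_f` that increases end up below
`φ_g(ξ) = (M, ℓ_g(ξ))`. Hence the largest changed entry is an old one, which is exactly a strict
sorted-lexicographic decrease.
-/

open Finset

/-- The vector `a` sorted in non-increasing order. -/
noncomputable def sortDesc {α : Type*} [LinearOrder α] {q : ℕ} (a : Fin q → α) : Fin q → α :=
  fun i => a (Tuple.sort a i.rev)

/-- `a` is strictly sorted-lexicographically smaller than `b`. -/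
def SLexLt {α : Type*} [LinearOrder α] {q : ℕ} (a b : Fin q → α) : Prop :=
  ∃ m : Fin q, (∀ i, i < m → sortDesc a i = sortDesc b i) ∧ sortDesc a m < sortDesc b m

/-- Sorted-lexicographic comparison of vectors indexed by an arbitrary finite type. -/
def SLexLtOn {α : Type*} [LinearOrder α] {ι : Type*} [Fintype ι] (a b : ι → α) : Prop :=
  SLexLt (a ∘ (Fintype.equivFin ι).symm) (b ∘ (Fintype.equivFin ι).symm)

/-- An improving move: some nonempty coalition `S` deviates (players outside `S`
keep their strategies) and every member of `S` strictly decreases her cost. -/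
def ImprovingMove {ι : Type*} {X : ι → Type*} {β : Type*} [Preorder β]
    (π : (∀ i, X i) → ι → β) (x y : ∀ i, X i) : Prop :=
  ∃ S : Finset ι, S.Nonempty ∧ (∀ i ∉ S, y i = x i) ∧ ∀ i ∈ S, π y i < π x i

open scoped NNReal

/-- The load of facility `f` under a splittable strategy profile `ξ`:
the sum of all intensities put on pure strategies containing `f`. -/
noncomputable def facLoad {ι F : Type*} [Fintype ι] [Fintype F] [DecidableEq F] {ni : ι → ℕ}
    (strat : ∀ i, Fin (ni i) → Finset F) (ξ : ∀ i, Fin (ni i) → ℝ≥0) (f : F) : ℝ≥0 :=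
  ∑ i, ∑ j ∈ Finset.univ.filter (fun j => f ∈ strat i j), ξ i j

/-- The set `F_i(ξ)` of facilities used by player `i` under profile `ξ`. -/
noncomputable def usedFac {ι F : Type*} [Fintype F] [DecidableEq F] {ni : ι → ℕ}
    (strat : ∀ i, Fin (ni i) → Finset F) (ξ : ∀ i, Fin (ni i) → ℝ≥0) (i : ι) : Finset F :=
  Finset.univ.filter (fun f => ∃ j, f ∈ strat i j ∧ 0 < ξ i j)

/-- The private (bottleneck) cost `π_i(ξ) = max_{f ∈ F_i(ξ)} c_f(ℓ_f(ξ))` of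
player `i` in an infinite bottleneck congestion game. -/
noncomputable def btlCost {ι F : Type*} [Fintype ι] [Fintype F] [DecidableEq F] {ni : ι → ℕ}
    (c : F → ℝ≥0 → ℝ≥0) (strat : ∀ i, Fin (ni i) → Finset F)
    (ξ : ∀ i, Fin (ni i) → ℝ≥0) (i : ι) : ℝ≥0 :=
  (usedFac strat ξ i).sup (fun f => c f (facLoad strat ξ f))

section SortedLex

variable {α : Type*} [LinearOrder α]

theorem sortDesc_antitone {q : ℕ} (a : Fin q → α) : Antitone (sortDesc a) :=
  fun _ _ hij => Tuple.monotone_sort a (Fin.rev_le_rev.mpr hij)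

theorem card_filter_le_sortDesc {q : ℕ} (a : Fin q → α) (s : α) :
    #{i | s ≤ sortDesc a i} = #{i | s ≤ a i} := by
  refine card_bij' (fun i _ => Tuple.sort a i.rev) (fun i _ => ((Tuple.sort a).symm i).rev)
    (fun i hi => ?_) (fun i hi => ?_) (fun i _ => by simp) (fun i _ => by simp)
  · simp only [mem_filter, mem_univ, true_and] at hi ⊢
    exact hi
  · simp only [mem_filter, mem_univ, true_and] at hi ⊢
    simpa [sortDesc] using hi

theorem Antitone.le_iff_lt_card {q : ℕ} {u : Fin q → α} (hu : Antitone u) (s : α) (i : Fin q) :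
    s ≤ u i ↔ (i : ℕ) < #{j | s ≤ u j} := by
  constructor
  · intro h
    have hsub : Iic i ⊆ ({j | s ≤ u j} : Finset (Fin q)) := fun j hj =>
      mem_filter.mpr ⟨mem_univ j, h.trans (hu (mem_Iic.mp hj))⟩
    simpa using card_le_card hsub
  · intro h
    by_contra! hlt
    have hsub : ({j | s ≤ u j} : Finset (Fin q)) ⊆ Iio i := fun j hj => by
      simp only [mem_filter, mem_univ, true_and] at hj
      exact mem_Iio.mpr (lt_of_not_ge fun hij => (hu hij).trans_lt hlt |>.not_ge hj)
    simpa using (card_le_card hsub).trans_lt' h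

theorem le_sortDesc_iff {q : ℕ} (a : Fin q → α) (s : α) (i : Fin q) :
    s ≤ sortDesc a i ↔ (i : ℕ) < #{j | s ≤ a j} := by
  rw [(sortDesc_antitone a).le_iff_lt_card, card_filter_le_sortDesc]

/-- Above the threshold `b g` the two vectors have the same upper level sets, and at `b g`
itself `b` has strictly more entries; so the sorted vectors agree up to the position
`#{j | b g ≤ a j}`, where `a` drops below `b g` and `b` does not. -/
theorem slexLt_of_dominant {q : ℕ} {a b : Fin q → α} (g : Fin q) (hg : a g ≠ b g)
    (ha : ∀ f, a f ≠ b f → a f < b g) (hb : ∀ f, a f ≠ b f → b f ≤ b g) : SLexLt a b := by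
  have hsub : ({j | b g ≤ a j} : Finset (Fin q)) ⊂ ({j | b g ≤ b j} : Finset (Fin q)) := by
    refine Finset.ssubset_iff_subset_ne.mpr ⟨fun j => ?_, fun heq => ?_⟩
    · simp only [mem_filter, mem_univ, true_and]
      intro hj
      by_cases hab : a j = b j
      · exact hab ▸ hj
      · exact absurd hj (ha j hab).not_ge
    · have : g ∈ ({j | b g ≤ a j} : Finset (Fin q)) := by rw [heq]; simp
      exact (ha g hg).not_ge (by simpa using this)
  have hcard : ∀ s, b g < s → #{j | s ≤ a j} = #{j | s ≤ b j} := by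
    intro s hs
    congr 1
    refine filter_congr fun j _ => ?_
    by_cases hab : a j = b j
    · rw [hab]
    · exact iff_of_false ((ha j hab).trans hs).not_ge ((hb j hab).trans_lt hs).not_ge
  have hlt := card_lt_card hsub
  set m : Fin q := ⟨#{j | b g ≤ a j}, hlt.trans_le (card_filter_le _ _) |>.trans_eq (by simp)⟩
  refine ⟨m, fun i (hi : (i : ℕ) < _) => ?_, ?_⟩
  · have hagree : ∀ s, b g ≤ s → (s ≤ sortDesc a i ↔ s ≤ sortDesc b i) := by
      intro s hs
      rcases hs.lt_or_eq with hs | rfl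
      · rw [le_sortDesc_iff, le_sortDesc_iff, hcard s hs]
      · rw [le_sortDesc_iff, le_sortDesc_iff]
        exact iff_of_true hi (hi.trans hlt)
    have hva : b g ≤ sortDesc a i := (le_sortDesc_iff a _ i).mpr hi
    have hvb : b g ≤ sortDesc b i := (le_sortDesc_iff b _ i).mpr (hi.trans hlt)
    exact le_antisymm ((hagree _ hva).mp le_rfl) ((hagree _ hvb).mpr le_rfl)
  · calc sortDesc a m < b g := not_le.mp fun h => lt_irrefl _ ((le_sortDesc_iff a _ m).mp h)
      _ ≤ sortDesc b m := (le_sortDesc_iff b _ m).mpr hlt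

theorem slexLtOn_of_forall_exists_lt {ι : Type*} [Fintype ι] {a b : ι → α} (hne : a ≠ b)
    (h : ∀ f, a f ≠ b f → ∃ g, a g ≠ b g ∧ a f < b g) : SLexLtOn a b := by
  obtain ⟨f₀, hf₀⟩ := Function.ne_iff.mp hne
  obtain ⟨g, hg, hgmax⟩ := exists_max_image {f | a f ≠ b f} b ⟨f₀, by simpa using hf₀⟩
  simp only [mem_filter, mem_univ, true_and] at hg hgmax
  have hbg : ∀ f, a f ≠ b f → b f ≤ b g := hgmax
  have hag : ∀ f, a f ≠ b f → a f < b g := fun f hf =>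
    have ⟨g', hg', hlt⟩ := h f hf
    hlt.trans_le (hbg g' hg')
  refine slexLt_of_dominant (Fintype.equivFin ι g) (by simpa using hg)
    (fun f hf => ?_) (fun f hf => ?_)
  · simpa using hag _ hf
  · simpa using hbg _ hf

end SortedLex

theorem strictMono_toLex_cost_load {c : ℝ≥0 → ℝ≥0} (hc : Monotone c) :
    StrictMono fun x : ℝ≥0 => toLex ((c x : ℝ), (x : ℝ)) :=
  Prod.Lex.toLex_strictMono.comp fun _ _ hxy =>
    Prod.mk_lt_mk_of_le_of_lt (NNReal.coe_le_coe.mpr (hc hxy.le)) (NNReal.coe_lt_coe.mpr hxy)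

section BottleneckGame

variable {ι F : Type*} [DecidableEq F] {ni : ι → ℕ} (strat : ∀ i, Fin (ni i) → Finset F)

noncomputable def playerLoad (ξ : ∀ i, Fin (ni i) → ℝ≥0) (i : ι) (f : F) : ℝ≥0 :=
  ∑ j ∈ univ.filter (fun j => f ∈ strat i j), ξ i j

variable {ξ ν : ∀ i, Fin (ni i) → ℝ≥0}

theorem facLoad_eq_sum_playerLoad [Fintype ι] [Fintype F] (f : F) :
    facLoad strat ξ f = ∑ i, playerLoad strat ξ i f :=
  rfl

variable {strat} [Fintype F]

theorem playerLoad_pos_iff {i : ι} {f : F} :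
    0 < playerLoad strat ξ i f ↔ f ∈ usedFac strat ξ i := by
  simp [playerLoad, usedFac, sum_pos_iff]

theorem usedFac_nonempty {i : ι} (hstrat : ∀ j, (strat i j).Nonempty) (hξ : 0 < ∑ j, ξ i j) :
    (usedFac strat ξ i).Nonempty := by
  obtain ⟨j, -, hj⟩ := sum_pos_iff.mp hξ
  obtain ⟨f, hf⟩ := hstrat j
  exact ⟨f, mem_filter.mpr ⟨mem_univ f, j, hf, hj⟩⟩

variable [Fintype ι] {c : F → ℝ≥0 → ℝ≥0}

theorem cost_le_btlCost {i : ι} {f : F} (hf : f ∈ usedFac strat ξ i) :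
    c f (facLoad strat ξ f) ≤ btlCost c strat ξ i :=
  le_sup (f := fun f => c f (facLoad strat ξ f)) hf

theorem exists_mem_usedFac_btlCost_eq {i : ι} (h : (usedFac strat ξ i).Nonempty) :
    ∃ g ∈ usedFac strat ξ i, btlCost c strat ξ i = c g (facLoad strat ξ g) :=
  exists_mem_eq_sup _ h _

variable {M : ℝ≥0}

theorem cost_lt_of_playerLoad_lt (hdev : ∀ i, ν i ≠ ξ i → btlCost c strat ν i < M)
    {i : ι} {f : F} (h : playerLoad strat ξ i f < playerLoad strat ν i f) :
    c f (facLoad strat ν f) < M := by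
  have hi : ν i ≠ ξ i := fun heq => h.ne (by rw [playerLoad, playerLoad, heq])
  exact (cost_le_btlCost (playerLoad_pos_iff.mp (pos_of_gt h))).trans_lt (hdev i hi)

theorem cost_lt_of_facLoad_lt (hdev : ∀ i, ν i ≠ ξ i → btlCost c strat ν i < M) {f : F}
    (h : facLoad strat ξ f < facLoad strat ν f) : c f (facLoad strat ν f) < M := by
  rw [facLoad_eq_sum_playerLoad, facLoad_eq_sum_playerLoad] at h
  obtain ⟨_, _, hi⟩ := exists_lt_of_sum_lt h
  exact cost_lt_of_playerLoad_lt hdev hi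

/-- If the load on a bottleneck facility `g` of a player `i` who improves stayed the same,
`i` must have left `g` (otherwise her cost would still be `c g (ℓ g)`), so some other player
raised her share of `g`, and that player's new cost forces `c g (ℓ g) < M`. -/
theorem facLoad_ne_of_bottleneck (hdev : ∀ i, ν i ≠ ξ i → btlCost c strat ν i < M)
    {i : ι} {g : F} (hi : btlCost c strat ν i < M) (hg : g ∈ usedFac strat ξ i)
    (hgM : c g (facLoad strat ξ g) = M) :
    facLoad strat ν g ≠ facLoad strat ξ g := by
  intro heq
  have hν : playerLoad strat ν i g = 0 := by
    by_contra h
    have := cost_le_btlCost (c := c) (playerLoad_pos_iff.mp (pos_iff_ne_zero.mpr h))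
    rw [heq, hgM] at this
    exact this.not_gt hi
  obtain ⟨k, hk⟩ : ∃ k, playerLoad strat ξ k g < playerLoad strat ν k g := by
    by_contra! hle
    rw [facLoad_eq_sum_playerLoad, facLoad_eq_sum_playerLoad] at heq
    have := (sum_eq_sum_iff_of_le fun k _ => hle k).mp heq i (mem_univ i)
    exact (playerLoad_pos_iff.mpr hg).ne' (this ▸ hν)
  have := cost_lt_of_playerLoad_lt hdev hk
  rw [heq, hgM] at this
  exact lt_irrefl M this

end BottleneckGame

theorem stmt_17_general {ι F : Type*} [Fintype ι] [Fintype F]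
    [DecidableEq F] {ni : ι → ℕ}
    (strat : ∀ i, Fin (ni i) → Finset F) (hstrat : ∀ i j, (strat i j).Nonempty)
    (d : ι → ℝ≥0) (hd : ∀ i, 0 < d i)
    (c : F → ℝ≥0 → ℝ≥0) (hc : ∀ f, Monotone (c f)) :
    ∀ ξ ν : ∀ i, Fin (ni i) → ℝ≥0,
      (∀ i, ∑ j, ξ i j = d i) → (∀ i, ∑ j, ν i j = d i) →
      ImprovingMove (btlCost c strat) ξ ν →
      SLexLtOn
        (fun f : F => (toLex ((c f (facLoad strat ν f) : ℝ), (facLoad strat ν f : ℝ)) : ℝ ×ₗ ℝ))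
        (fun f : F => (toLex ((c f (facLoad strat ξ f) : ℝ), (facLoad strat ξ f : ℝ)) : ℝ ×ₗ ℝ)) := by
  intro ξ ν hξ _ ⟨S, hS, hout, himp⟩
  obtain ⟨i, hiS, hmax⟩ := S.exists_max_image (btlCost c strat ξ) hS
  have hdev : ∀ k, ν k ≠ ξ k → btlCost c strat ν k < btlCost c strat ξ i := fun k hk =>
    have hkS := not_imp_comm.mp (hout k) hk
    (himp k hkS).trans_le (hmax k hkS)
  obtain ⟨g, hg, hgM⟩ :=
    exists_mem_usedFac_btlCost_eq (c := c) (usedFac_nonempty (hstrat i) ((hξ i).symm ▸ hd i))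
  have hg_ne := (strictMono_toLex_cost_load (hc g)).injective.ne
    (facLoad_ne_of_bottleneck hdev (himp i hiS) hg hgM.symm)
  refine slexLtOn_of_forall_exists_lt (Function.ne_iff.mpr ⟨g, hg_ne⟩) fun f hf => ?_
  rcases hf.lt_or_gt with hlt | hgt
  · exact ⟨f, hf, hlt⟩
  · have hload := (strictMono_toLex_cost_load (hc f)).lt_iff_lt.mp hgt
    refine ⟨g, hg_ne, Prod.Lex.toLex_lt_toLex.mpr (Or.inl ?_)⟩
    exact_mod_cast hgM ▸ cost_lt_of_facLoad_lt hdev hload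

/-- An infinite bottleneck congestion game has the 𝒜-LIP for
`𝒜 = ℝ²` with the ordinary lexicographical order and
`φ_f(ξ) = (c_f(ℓ_f(ξ)), ℓ_f(ξ))`. -/
theorem stmt_17 {ι F : Type*} [Fintype ι] [Nonempty ι] [Fintype F] [Nonempty F]
    [DecidableEq F] {ni : ι → ℕ} (hni : ∀ i, 0 < ni i)
    (strat : ∀ i, Fin (ni i) → Finset F) (hstrat : ∀ i j, (strat i j).Nonempty)
    (d : ι → ℝ≥0) (hd : ∀ i, 0 < d i)
    (c : F → ℝ≥0 → ℝ≥0) (hc : ∀ f, Monotone (c f)) :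
    ∀ ξ ν : ∀ i, Fin (ni i) → ℝ≥0,
      (∀ i, ∑ j, ξ i j = d i) → (∀ i, ∑ j, ν i j = d i) →
      ImprovingMove (btlCost c strat) ξ ν →
      SLexLtOn
        (fun f : F => (toLex ((c f (facLoad strat ν f) : ℝ), (facLoad strat ν f : ℝ)) : ℝ ×ₗ ℝ))
        (fun f : F => (toLex ((c f (facLoad strat ξ f) : ℝ), (facLoad strat ξ f : ℝ)) : ℝ ×ₗ ℝ)) :=
  stmt_17_general strat hstrat d hd c hc
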